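/- For every positive integer n, the fugacity partition function of staircase tableaux at q = 1 and y = 1 factors as Z_n(1; α, β, γ, δ; 1) = ∏_{j=0}^{n−1} (α + β + γ + δ + j(α+γ)(β+δ)), as an identity in the polynomial ring ℤ[α, β, γ, δ]. -/

import Mathlib

inductive SLetter : Type
  | A | B | G | D
deriving DecidableEq, Repr

instance instFintypeSLetter : Fintype SLetter where
  elems := {SLetter.A, SLetter.B, SLetter.G, SLetter.D}
  complete := fun x => by cases x <;> simp

/-- A filling `T` of the staircase Young diagram of shape `(n, n-1, …, 1)`
(boxes `(i,j)` with `i + j < n`, row `i` from the top, column `j` from the left,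
diagonal boxes those with `i + j + 1 = n`) is a staircase tableau if:
boxes outside the shape are unused (empty); no diagonal box is empty;
all boxes to the left of a `β` or `δ` in its row are empty;
all boxes above an `α` or `γ` in its column are empty. -/
def IsStaircase (n : ℕ) (T : Fin n → Fin n → Option SLetter) : Prop :=
  (∀ i j : Fin n, n ≤ (i : ℕ) + (j : ℕ) → T i j = none) ∧
  (∀ i j : Fin n, (i : ℕ) + (j : ℕ) + 1 = n → T i j ≠ none) ∧
  (∀ i j j' : Fin n, j' < j → (T i j = some SLetter.B ∨ T i j = some SLetter.D) →
      T i j' = none) ∧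
  (∀ i i' j : Fin n, i' < i → (T i j = some SLetter.A ∨ T i j = some SLetter.G) →
      T i' j = none)

instance (n : ℕ) : DecidablePred (IsStaircase n) := fun T => by
  unfold IsStaircase; infer_instance

/-- The staircase tableaux of size `n`. -/
def StaircaseTableau (n : ℕ) : Type :=
  {T : Fin n → Fin n → Option SLetter // IsStaircase n T}

instance (n : ℕ) : Fintype (StaircaseTableau n) := Subtype.fintype _

instance (n : ℕ) : DecidableEq (StaircaseTableau n) := Subtype.instDecidableEq

/-- The number of boxes of `T` filled with the symbol `x`. -/
def countLetter (n : ℕ) (T : Fin n → Fin n → Option SLetter) (x : SLetter) : ℕ :=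
  (Finset.univ.filter (fun p : Fin n × Fin n => T p.1 p.2 = some x)).card

/-- The label of the nearest labeled box strictly to the right of `(i,j)` in row `i`. -/
def rightLabel (n : ℕ) (T : Fin n → Fin n → Option SLetter) (i j : Fin n) : Option SLetter :=
  List.findSome? (fun j' => T i j') ((List.finRange n).drop ((j : ℕ) + 1))

/-- The label of the nearest labeled box strictly below `(i,j)` in column `j`. -/
def belowLabel (n : ℕ) (T : Fin n → Fin n → Option SLetter) (i j : Fin n) : Option SLetter :=
  List.findSome? (fun i' => T i' j) ((List.finRange n).drop ((i : ℕ) + 1))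

/-- Whether the (empty) box `(i,j)` receives a `q` in the weight of `T`:
an empty box seeing a `δ` to its right gets `q`; an empty box seeing an `α` or `γ` to
its right and a `β` or `γ` below it gets `q`; all other (empty) boxes get `1`. -/
def boxQ (n : ℕ) (T : Fin n → Fin n → Option SLetter) (i j : Fin n) : Bool :=
  match T i j with
  | some _ => false
  | none =>
    match rightLabel n T i j, belowLabel n T i j with
    | some SLetter.D, _ => true
    | some SLetter.A, some SLetter.B => true
    | some SLetter.A, some SLetter.G => true
    | some SLetter.G, some SLetter.B => true
    | some SLetter.G, some SLetter.G => true
    | _, _ => false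

/-- The exponent of `q` in the weight of `T`. -/
def qCount (n : ℕ) (T : Fin n → Fin n → Option SLetter) : ℕ :=
  (Finset.univ.filter (fun p : Fin n × Fin n => boxQ n T p.1 p.2 = true)).card

/-- The type of `T`, as a word in `Fin n → Bool`, read off the diagonal boxes from
northeast (index `0`) to southwest (index `n-1`): `true` (a `•`) for each `α` or `δ`,
`false` (a `∘`) for each `β` or `γ`. -/
def typeWord (n : ℕ) (T : Fin n → Fin n → Option SLetter) : Fin n → Bool := fun i =>
  match T i ⟨n - 1 - (i : ℕ), by have := i.isLt; omega⟩ with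
  | some SLetter.A => true
  | some SLetter.D => true
  | _ => false

/-- `t(T)`, the number of `•`'s in the type of `T`. -/
def bulletCount (n : ℕ) (T : Fin n → Fin n → Option SLetter) : ℕ :=
  (Finset.univ.filter (fun i : Fin n => typeWord n T i = true)).card

/-- The weight of a staircase tableau: the product of all its labels, with each empty
box contributing `q` or `1` according to the rules (`u` is set to `1`). -/
def stWt {R : Type*} [CommSemiring R] (n : ℕ) (a b g d q : R)
    (T : Fin n → Fin n → Option SLetter) : R :=
  a ^ countLetter n T SLetter.A * b ^ countLetter n T SLetter.B *
    g ^ countLetter n T SLetter.G * d ^ countLetter n T SLetter.D * q ^ qCount n T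

/-- The fugacity partition function `Z_n(y; α, β, γ, δ; q) = Σ_T wt(T) y^{t(T)}`,
summed over all staircase tableaux of size `n`. -/
def stZ (R : Type*) [CommSemiring R] (n : ℕ) (y a b g d q : R) : R :=
  ∑ T : StaircaseTableau n, stWt n a b g d q T.val * y ^ bulletCount n T.val

/-- The generating polynomial `Z_σ(α, β, γ, δ; q)` of staircase tableaux of a given
type `σ` (encoded as a list of booleans, `true` = `•`, `false` = `∘`). -/
def stZw (R : Type*) [CommSemiring R] (w : List Bool) (a b g d q : R) : R :=
  ∑ T ∈ Finset.univ.filter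
      (fun T : StaircaseTableau w.length => List.ofFn (typeWord w.length T.val) = w),
    stWt w.length a b g d q T.val

/-!
Cut off the first column. Deleting it from a staircase tableau of size `n + 1` leaves a
staircase tableau `T` of size `n`, and a column `c` can be put to the left of `T` exactly when
its bottom box is labelled, it is empty in the rows of `T` whose leftmost label is `β` or `δ`,
and everything above an `α` or `γ` of `c` is empty. Give every row whose leftmost label is `α`
or `γ` a weight `u`. Summing over the admissible columns turns the factor `u` of each such row
of `T` into `u + β + δ` and contributes `(α + γ) u + β + δ` for the new bottom row, so
`Z_{n+1}(u) = ((α + γ) u + β + δ) Z_n(u + β + δ)` and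
`Z_n(u) = ∏_{j<n} ((α + γ)(u + j(β + δ)) + β + δ)`, which is the claimed product at `u = 1`.
-/

namespace Staircase

open Finset

variable {R : Type*} [CommSemiring R] (a b g d u : R)

def labelWt : Option SLetter → R
  | none => 1
  | some .A => a
  | some .B => b
  | some .G => g
  | some .D => d

def isAG : Option SLetter → Bool
  | some .A | some .G => true
  | _ => false

lemma univ_sLetter : (univ : Finset SLetter) = {.A, .B, .G, .D} := by decide

lemma sum_fin_succ_pi {α M : Type*} [Fintype α] [AddCommMonoid M] {m : ℕ}
    (f : (Fin (m + 1) → α) → M) : ∑ c, f c = ∑ x, ∑ c, f (Fin.cons x c) :=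
  ((Fin.consEquiv fun _ => α).sum_comp f).symm.trans (Fintype.sum_prod_type _)

lemma sum_option_sLetter (f : Option SLetter → R) :
    ∑ o, f o = f none + f (some .A) + f (some .B) + f (some .G) + f (some .D) := by
  simp [Fintype.sum_option, univ_sLetter, add_assoc]

section Rows

variable {m : ℕ}

def firstLabel (r : Fin m → Option SLetter) : Option SLetter :=
  List.findSome? r (List.finRange m)

lemma firstLabel_cons (o : Option SLetter) (r : Fin m → Option SLetter) :
    firstLabel (Fin.cons o r : Fin (m + 1) → Option SLetter) = o.or (firstLabel r) := by
  cases o <;> simp [firstLabel, List.finRange_succ, List.findSome?_map, Function.comp_def]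

lemma firstLabel_eq_none_iff {r : Fin m → Option SLetter} :
    firstLabel r = none ↔ ∀ j, r j = none := by
  simp [firstLabel, List.findSome?_eq_none_iff]

lemma firstLabel_eq_of_forall_lt {r : Fin m → Option SLetter} {j : Fin m} (hj : r j ≠ none)
    (h : ∀ j' < j, r j' = none) : firstLabel r = r j := by
  induction m with
  | zero => exact j.elim0
  | succ m ih =>
    rw [← Fin.cons_self_tail r, firstLabel_cons]
    induction j using Fin.cases with
    | zero => cases hr : r 0 <;> simp_all
    | succ k =>
      rw [h 0 k.succ_pos, Option.none_or, Fin.cons_succ]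
      exact ih hj fun j' hj' => h j'.succ (Fin.succ_lt_succ_iff.mpr hj')

lemma exists_of_firstLabel_eq_some {r : Fin m → Option SLetter} {l : SLetter}
    (h : firstLabel r = some l) : ∃ j, r j = some l := by
  obtain ⟨-, j, -, -, hj, -⟩ := List.findSome?_eq_some_iff.mp h
  exact ⟨j, hj⟩

end Rows

section Column

variable {m n : ℕ}

/-- Weight of the entry `o` of a new first column in a row of `T` that starts with `α` or `γ`
(`s = true`) or with `β` or `δ`; it carries the factor `u` of the glued row when that row starts
with `α` or `γ`, and vanishes where the row rule forbids a label. -/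
def entryWt : Bool → Option SLetter → R
  | true, none => u
  | true, some .A => a * u
  | true, some .B => b
  | true, some .G => g * u
  | true, some .D => d
  | false, none => 1
  | false, some _ => 0

def bottomWt : Option SLetter → R
  | none => 0
  | some .A => a * u
  | some .B => b
  | some .G => g * u
  | some .D => d

/-- The column rule of staircase tableaux; `ag = false` forbids `α` and `γ` altogether, which is
what the rule imposes below a labelled box. -/
def ColumnRule (ag : Bool) (c : Fin m → Option SLetter) : Prop :=
  ∀ i, isAG (c i) → ag ∧ ∀ i' < i, c i' = none

instance (ag : Bool) : DecidablePred (ColumnRule (m := m) ag) := fun _ => by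
  unfold ColumnRule; infer_instance

lemma columnRule_cons {ag : Bool} {o : Option SLetter} {c : Fin m → Option SLetter} :
    ColumnRule ag (Fin.cons o c : Fin (m + 1) → Option SLetter) ↔
      (isAG o → ag) ∧ ColumnRule (ag && o.isNone) c := by
  simp only [ColumnRule, Fin.forall_fin_succ, Fin.cons_zero, Fin.cons_succ, Fin.not_lt_zero,
    IsEmpty.forall_iff, implies_true, and_true, Fin.succ_pos, forall_true_left,
    Fin.succ_lt_succ_iff, Bool.and_eq_true, Option.isNone_iff_eq_none]
  constructor
  · rintro ⟨h0, h⟩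
    exact ⟨h0, fun i hi => ⟨⟨(h i hi).1, (h i hi).2.1⟩, (h i hi).2.2⟩⟩
  · rintro ⟨h0, h⟩
    exact ⟨h0, fun i hi => ⟨(h i hi).1.1, (h i hi).1.2, (h i hi).2⟩⟩

def columnWt (ag : Bool) (s : Fin n → Bool) (c : Fin (n + 1) → Option SLetter) : R :=
  (if ColumnRule ag c then 1 else 0) * bottomWt a b g d u (c (Fin.last n)) *
    ∏ i : Fin n, entryWt a b g d u (s i) (c i.castSucc)

lemma columnWt_cons (ag : Bool) (s : Fin (n + 1) → Bool) (o : Option SLetter)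
    (c : Fin (n + 1) → Option SLetter) :
    columnWt a b g d u ag s (Fin.cons o c) =
      (if isAG o ∧ ag = false then 0 else entryWt a b g d u (s 0) o) *
        columnWt a b g d u (ag && o.isNone) (fun i => s i.succ) c := by
  simp only [columnWt, columnRule_cons, Fin.prod_univ_succ, ← Fin.succ_last, Fin.cons_succ,
    Fin.castSucc_zero, Fin.cons_zero, ← Fin.succ_castSucc]
  by_cases h : isAG o ∧ ag = false
  · simp [h]
  · have h' : isAG o → ag := by cases ag <;> simp_all
    simp only [h, eq_true h', true_and, if_false]
    ring

lemma sum_columnWt (ag : Bool) (s : Fin n → Bool) :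
    ∑ c, columnWt a b g d u ag s c =
      ((if ag then (a + g) * u else 0) + (b + d)) * ∏ i, (if s i then u + (b + d) else 1) := by
  induction n generalizing ag with
  | zero =>
    rw [← (Equiv.funUnique (Fin 1) (Option SLetter)).symm.sum_comp, sum_option_sLetter]
    cases ag
    · simp [columnWt, ColumnRule, isAG, bottomWt]
    · simp [columnWt, ColumnRule, isAG, bottomWt]
      ring
  | succ n ih =>
    rw [sum_fin_succ_pi, sum_option_sLetter]
    simp only [columnWt_cons, ← mul_sum, ih, Fin.prod_univ_succ]
    cases ag <;> cases s 0 <;> simp [isAG, entryWt] <;> ring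

end Column

section Tableau

variable {n : ℕ}

abbrev Filling (n : ℕ) := Fin n → Fin n → Option SLetter

def startsAG (T : Filling n) (i : Fin n) : Bool := isAG (firstLabel (T i))

lemma firstLabel_ne_none {T : Filling n} (hT : IsStaircase n T) (i : Fin n) :
    firstLabel (T i) ≠ none := by
  rw [Ne, firstLabel_eq_none_iff]
  exact fun h => hT.2.1 i ⟨n - 1 - i, by omega⟩ (by simp; omega) (h _)

lemma startsAG_eq_false_iff {T : Filling n} (hT : IsStaircase n T) {i : Fin n} :
    startsAG T i = false ↔ ∃ j, T i j = some .B ∨ T i j = some .D := by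
  constructor
  · intro h
    obtain ⟨l, hl⟩ := Option.ne_none_iff_exists'.mp (firstLabel_ne_none hT i)
    obtain ⟨j, hj⟩ := exists_of_firstLabel_eq_some hl
    rw [startsAG, hl] at h
    cases l <;> simp_all [isAG] <;> exact ⟨j, by simp [hj]⟩
  · rintro ⟨j, hj⟩
    rw [startsAG, firstLabel_eq_of_forall_lt (by rcases hj with h | h <;> simp [h])
      fun j' hj' => hT.2.2.1 i j j' hj' hj]
    rcases hj with h | h <;> simp [h, isAG]

/-- The column `c` put to the left of `T`; the new bottom row is empty apart from `c`. -/
def glue (T : Filling n) (c : Fin (n + 1) → Option SLetter) : Filling (n + 1) :=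
  fun i => Fin.cons (c i) (Fin.snoc (α := fun _ => Fin n → Option SLetter) T (fun _ => none) i)

def dropFirstColumn (T : Filling (n + 1)) : Filling n := fun i j => T i.castSucc j.succ

def firstColumn (T : Filling (n + 1)) : Fin (n + 1) → Option SLetter := fun i => T i 0

section Glue

variable (T : Filling n) (c : Fin (n + 1) → Option SLetter)

@[simp] lemma glue_zero (i : Fin (n + 1)) : glue T c i 0 = c i := rfl

@[simp] lemma glue_castSucc_succ (i j : Fin n) : glue T c i.castSucc j.succ = T i j := by
  simp [glue]

@[simp] lemma glue_last_succ (j : Fin n) : glue T c (Fin.last n) j.succ = none := by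
  simp [glue]

@[simp] lemma dropFirstColumn_glue : dropFirstColumn (glue T c) = T := by
  funext i j; simp [dropFirstColumn]

@[simp] lemma firstColumn_glue : firstColumn (glue T c) = c := rfl

end Glue

lemma glue_dropFirstColumn {T : Filling (n + 1)} (hT : IsStaircase (n + 1) T) :
    glue (dropFirstColumn T) (firstColumn T) = T := by
  funext i j
  induction j using Fin.cases with
  | zero => rfl
  | succ k =>
    induction i using Fin.lastCases with
    | last => rw [glue_last_succ, hT.1 (Fin.last n) k.succ (by simp)]
    | cast i => simp [dropFirstColumn]

lemma isStaircase_dropFirstColumn {T : Filling (n + 1)} (hT : IsStaircase (n + 1) T) :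
    IsStaircase n (dropFirstColumn T) :=
  ⟨fun i j h => hT.1 _ _ (by simp; omega),
    fun i j h => hT.2.1 _ _ (by simp; omega),
    fun i j j' hlt hBD => hT.2.2.1 i.castSucc j.succ j'.succ (by simpa using hlt) hBD,
    fun i i' j hlt hAG => hT.2.2.2 i.castSucc i'.castSucc j.succ (by simpa using hlt) hAG⟩

def IsAdmissibleColumn (T : Filling n) (c : Fin (n + 1) → Option SLetter) : Prop :=
  c (Fin.last n) ≠ none ∧ (∀ i, startsAG T i = false → c i.castSucc = none) ∧
    ColumnRule true c

instance (T : Filling n) : DecidablePred (IsAdmissibleColumn T) := fun _ => by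
  unfold IsAdmissibleColumn; infer_instance

lemma isAG_eq_true_iff {o : Option SLetter} : isAG o = true ↔ o = some .A ∨ o = some .G := by
  rcases o with _ | ⟨_ | _ | _ | _⟩ <;> simp [isAG]

lemma isAdmissibleColumn_of_isStaircase_glue {T : Filling n} (hT : IsStaircase n T)
    {c : Fin (n + 1) → Option SLetter} (h : IsStaircase (n + 1) (glue T c)) :
    IsAdmissibleColumn T c := by
  refine ⟨h.2.1 (Fin.last n) 0 (by simp), fun i hi => ?_,
    fun i hi => ⟨rfl, fun i' hi' => ?_⟩⟩
  · obtain ⟨j, hj⟩ := (startsAG_eq_false_iff hT).mp hi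
    exact h.2.2.1 i.castSucc j.succ 0 j.succ_pos (by simpa using hj)
  · exact h.2.2.2 i i' 0 hi' (isAG_eq_true_iff.mp hi)

lemma isStaircase_glue {T : Filling n} (hT : IsStaircase n T) {c : Fin (n + 1) → Option SLetter}
    (hc : IsAdmissibleColumn T c) : IsStaircase (n + 1) (glue T c) := by
  obtain ⟨hlast, hrows, hcol⟩ := hc
  refine ⟨fun i j h => ?_, fun i j h => ?_, fun i j j' hj' hBD => ?_, fun i i' j hi' hAG => ?_⟩
  · induction j using Fin.cases with
    | zero => simp at h; omega
    | succ k =>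
      induction i using Fin.lastCases with
      | last => simp
      | cast i => simpa using hT.1 i k (by simp at h; omega)
  · induction j using Fin.cases with
    | zero => obtain rfl : i = Fin.last n := Fin.ext (by simp at h ⊢; omega); exact hlast
    | succ k =>
      induction i using Fin.lastCases with
      | last => simp at h
      | cast i => simpa using hT.2.1 i k (by simp at h; omega)
  · induction j using Fin.cases with
    | zero => simp at hj'
    | succ k =>
      induction i using Fin.lastCases with
      | last => simp at hBD
      | cast i =>
        rw [glue_castSucc_succ] at hBD
        induction j' using Fin.cases with
        | zero => exact hrows i ((startsAG_eq_false_iff hT).mpr ⟨k, hBD⟩)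
        | succ k' => simpa using hT.2.2.1 i k k' (by simpa using hj') hBD
  · induction j using Fin.cases with
    | zero => exact (hcol i (isAG_eq_true_iff.mpr hAG)).2 i' hi'
    | succ k =>
      induction i using Fin.lastCases with
      | last => simp at hAG
      | cast i =>
        induction i' using Fin.lastCases with
        | last => exact absurd hi' (Fin.castSucc_lt_last i).not_gt
        | cast i' => simpa using hT.2.2.2 i i' k (by simpa using hi') (by simpa using hAG)

def labelWeight (T : Filling n) : R := ∏ i, ∏ j, labelWt a b g d (T i j)

lemma labelWeight_eq (T : Filling n) :
    labelWeight a b g d T = a ^ countLetter n T .A * b ^ countLetter n T .B *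
      g ^ countLetter n T .G * d ^ countLetter n T .D := by
  rw [labelWeight, ← Fintype.prod_prod_type',
    ← prod_fiberwise' univ (fun p : Fin n × Fin n => T p.1 p.2) (labelWt a b g d)]
  simp [Fintype.prod_option, univ_sLetter, countLetter, labelWt, mul_assoc]

lemma labelWeight_glue (T : Filling n) (c : Fin (n + 1) → Option SLetter) :
    labelWeight a b g d (glue T c) = (∏ i, labelWt a b g d (c i)) * labelWeight a b g d T := by
  have hrow (i : Fin (n + 1)) : ∏ j, labelWt a b g d (glue T c i j) =
      labelWt a b g d (c i) * ∏ j : Fin n, labelWt a b g d (glue T c i j.succ) :=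
    Fin.prod_univ_succ _
  simp only [labelWeight, hrow, prod_mul_distrib]
  rw [Fin.prod_univ_castSucc (fun i => ∏ j : Fin n, labelWt a b g d (glue T c i j.succ))]
  simp [labelWt]

lemma startsAG_glue_castSucc (T : Filling n) (c : Fin (n + 1) → Option SLetter) (i : Fin n) :
    startsAG (glue T c) i.castSucc = isAG ((c i.castSucc).or (firstLabel (T i))) := by
  simp [startsAG, glue, firstLabel_cons]

lemma startsAG_glue_last (T : Filling n) (c : Fin (n + 1) → Option SLetter) :
    startsAG (glue T c) (Fin.last n) = isAG (c (Fin.last n)) := by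
  have : firstLabel (fun _ : Fin n => (none : Option SLetter)) = none :=
    firstLabel_eq_none_iff.mpr fun _ => rfl
  simp [startsAG, glue, firstLabel_cons, this]

/-- `u` marks the rows whose leftmost label is `α` or `γ`. -/
def weight (T : Filling n) : R := labelWeight a b g d T * ∏ i, (if startsAG T i then u else 1)

lemma labelWt_mul_entryWt {f o : Option SLetter} (h : isAG f = false → o = none) :
    labelWt a b g d o * (if isAG (o.or f) then u else 1) = entryWt a b g d u (isAG f) o := by
  cases hf : isAG f <;> rcases o with _ | ⟨_ | _ | _ | _⟩ <;> simp_all [labelWt, entryWt, isAG]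

lemma labelWt_mul_bottomWt {o : Option SLetter} (h : o ≠ none) :
    labelWt a b g d o * (if isAG o then u else 1) = bottomWt a b g d u o := by
  rcases o with _ | ⟨_ | _ | _ | _⟩ <;> simp_all [labelWt, bottomWt, isAG]

lemma weight_glue {T : Filling n} {c : Fin (n + 1) → Option SLetter}
    (hc : IsAdmissibleColumn T c) :
    weight a b g d u (glue T c) =
      labelWeight a b g d T * columnWt a b g d u true (startsAG T) c := by
  obtain ⟨hlast, hrows, hcol⟩ := hc
  have hentries : ∀ i : Fin n, labelWt a b g d (c i.castSucc) *
      (if startsAG (glue T c) i.castSucc then u else 1) =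
        entryWt a b g d u (startsAG T i) (c i.castSucc) := fun i => by
    rw [startsAG_glue_castSucc]
    exact labelWt_mul_entryWt a b g d u (hrows i)
  rw [weight, labelWeight_glue, columnWt, if_pos hcol, one_mul, mul_right_comm, mul_comm,
    ← prod_mul_distrib, Fin.prod_univ_castSucc, startsAG_glue_last,
    labelWt_mul_bottomWt a b g d u hlast, prod_congr rfl fun i _ => hentries i, mul_comm (∏ _, _)]

lemma columnWt_eq_zero {T : Filling n} {c : Fin (n + 1) → Option SLetter}
    (hc : ¬ IsAdmissibleColumn T c) : columnWt a b g d u true (startsAG T) c = 0 := by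
  by_cases hcol : ColumnRule true c
  swap
  · simp [columnWt, hcol]
  by_cases hlast : c (Fin.last n) = none
  · simp [columnWt, hlast, bottomWt]
  obtain ⟨i, hi, hci⟩ : ∃ i, startsAG T i = false ∧ c i.castSucc ≠ none := by
    simpa [IsAdmissibleColumn, hcol, hlast] using hc
  obtain ⟨l, hl⟩ := Option.ne_none_iff_exists'.mp hci
  rw [columnWt, prod_eq_zero (mem_univ i) (by rw [hi, hl]; rfl), mul_zero]

lemma sum_weight_glue (T : Filling n) :
    ∑ c : {c // IsAdmissibleColumn T c}, weight a b g d u (glue T c) =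
      ((a + g) * u + (b + d)) * weight a b g d (u + (b + d)) T := by
  calc _ = ∑ c : {c // IsAdmissibleColumn T c},
          labelWeight a b g d T * columnWt a b g d u true (startsAG T) c :=
        sum_congr rfl fun c _ => weight_glue a b g d u c.2
    _ = ∑ c, labelWeight a b g d T * columnWt a b g d u true (startsAG T) c := by
        rw [← Fintype.sum_subtype_add_sum_subtype (IsAdmissibleColumn T)
          fun c => labelWeight a b g d T * columnWt a b g d u true (startsAG T) c,
          sum_eq_zero (s := (univ : Finset {c // ¬ IsAdmissibleColumn T c}))
            fun c _ => by rw [columnWt_eq_zero a b g d u c.2, mul_zero], add_zero]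
    _ = _ := by rw [← mul_sum, sum_columnWt, if_pos rfl, weight]; ring

def firstColumnEquiv (n : ℕ) :
    StaircaseTableau (n + 1) ≃ Σ T : StaircaseTableau n, {c // IsAdmissibleColumn T.1 c} where
  toFun T := ⟨⟨dropFirstColumn T.1, isStaircase_dropFirstColumn T.2⟩, firstColumn T.1,
    isAdmissibleColumn_of_isStaircase_glue (isStaircase_dropFirstColumn T.2)
      (by rw [glue_dropFirstColumn T.2]; exact T.2)⟩
  invFun p := ⟨glue p.1.1 p.2.1, isStaircase_glue p.1.2 p.2.2⟩
  left_inv T := Subtype.ext (glue_dropFirstColumn T.2)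
  right_inv p := Sigma.subtype_ext (Subtype.ext (dropFirstColumn_glue p.1.1 p.2.1))
    (firstColumn_glue p.1.1 p.2.1)

end Tableau

def refinedPartition (n : ℕ) : R := ∑ T : StaircaseTableau n, weight a b g d u T.1

instance : Unique (StaircaseTableau 0) where
  default := ⟨fun i => i.elim0, fun i => i.elim0, fun i => i.elim0, fun i => i.elim0,
    fun i => i.elim0⟩
  uniq _ := Subtype.ext (funext fun i => i.elim0)

lemma refinedPartition_zero : refinedPartition a b g d u 0 = 1 := by
  simp [refinedPartition, weight, labelWeight]

lemma refinedPartition_succ (n : ℕ) :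
    refinedPartition a b g d u (n + 1) =
      ((a + g) * u + (b + d)) * refinedPartition a b g d (u + (b + d)) n := by
  rw [refinedPartition, ← (firstColumnEquiv n).symm.sum_comp, Fintype.sum_sigma,
    refinedPartition, mul_sum]
  exact sum_congr rfl fun T _ => sum_weight_glue a b g d u T.1

lemma refinedPartition_eq (n : ℕ) :
    refinedPartition a b g d u n = ∏ j ∈ range n, ((a + g) * (u + j * (b + d)) + (b + d)) := by
  induction n generalizing u with
  | zero => exact refinedPartition_zero a b g d u
  | succ n ih =>
    rw [refinedPartition_succ, ih, prod_range_succ', mul_comm]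
    congr 1
    · refine prod_congr rfl fun j _ => ?_
      push_cast
      ring
    · simp

lemma stZ_one_one_eq_refinedPartition (n : ℕ) : stZ R n 1 a b g d 1 = refinedPartition a b g d 1 n := by
  simp [stZ, refinedPartition, weight, stWt, labelWeight_eq]

end Staircase

open MvPolynomial in
theorem staircase_partition_q_one_general (n : ℕ) :
    stZ (MvPolynomial (Fin 4) ℤ) n 1 (X 0) (X 1) (X 2) (X 3) 1 =
      ∏ j ∈ Finset.range n,
        (X 0 + X 1 + X 2 + X 3 + (j : MvPolynomial (Fin 4) ℤ) * ((X 0 + X 2) * (X 1 + X 3))) := by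
  rw [Staircase.stZ_one_one_eq_refinedPartition, Staircase.refinedPartition_eq]
  refine Finset.prod_congr rfl fun j _ => ?_
  ring

open MvPolynomial in
/-- For every positive integer `n`, the fugacity partition function of staircase tableaux
at `q = 1`, `y = 1` factors as
`Z_n(1; α, β, γ, δ; 1) = ∏_{j=0}^{n-1} (α + β + γ + δ + j(α+γ)(β+δ))` in `ℤ[α, β, γ, δ]`. -/
theorem staircase_partition_q_one (n : ℕ) (hn : 1 ≤ n) :
    stZ (MvPolynomial (Fin 4) ℤ) n 1 (X 0) (X 1) (X 2) (X 3) 1 =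
      ∏ j ∈ Finset.range n,
        (X 0 + X 1 + X 2 + X 3 + (j : MvPolynomial (Fin 4) ℤ) * ((X 0 + X 2) * (X 1 + X 3))) :=
  staircase_partition_q_one_general n
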